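/- Fixed points of density evolution below the threshold: if q_0, r, l satisfy q_0·(l-1)·(r-1) < 1 with r,l ≥ 2 and q_0 ∈ [0,1], then x = 0 is the unique fixed point in [0,1] of f(x) = q_0·(1 - (1-x)^{r-1})^{l-1} that satisfies f(x) = x with x ≤ 1/((l-1)(r-1)), since f(x) ≤ q_0·((r-1)x)^{l-1} ≤ q_0·(r-1)·x·((r-1)x)^{l-2} < x for 0 < x ≤ 1/(r-1) when l ≥ 2 and q_0(r-1) < 1; in particular, for l = 2 and q_0(r-1) < 1, the iteration q_d = f(q_{d-1}) converges to 0 from any q_0-bounded start. -/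
import Mathlib


open Filter

/-- Below the threshold `q_0(l-1)(r-1) < 1`: `0` is a fixed point of
`f(x) = q_0·(1 - (1-x)^{r-1})^{l-1}`, it is the unique fixed point in `[0,1]` with
`x ≤ 1/((l-1)(r-1))`, and for `l = 2` the density evolution iteration converges to `0`. -/
theorem density_evolution_below_threshold (r l : ℕ) (hr : 2 ≤ r) (hl : 2 ≤ l)
    (q₀ : ℝ) (hq0 : 0 ≤ q₀) (hq1 : q₀ ≤ 1)
    (hthr : q₀ * ((l : ℝ) - 1) * ((r : ℝ) - 1) < 1)
    (f : ℝ → ℝ) (hf : ∀ x, f x = q₀ * (1 - (1 - x) ^ (r - 1)) ^ (l - 1)) :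
    f 0 = 0 ∧
    (∀ x : ℝ, 0 ≤ x → x ≤ 1 → x ≤ 1 / (((l : ℝ) - 1) * ((r : ℝ) - 1)) →
      f x = x → x = 0) ∧
    (l = 2 → ∀ q : ℕ → ℝ, q 0 = q₀ → (∀ d, q (d + 1) = f (q d)) →
      Tendsto q atTop (nhds 0)) := by
  have hrc : ((r - 1 : ℕ) : ℝ) = (r : ℝ) - 1 := by
    have : (1:ℕ) ≤ r := by omega
    push_cast [this]; ring
  have hr1 : (1:ℝ) ≤ (r : ℝ) - 1 := by
    have : (2:ℝ) ≤ r := by exact_mod_cast hr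
    linarith
  have hl1 : (1:ℝ) ≤ (l : ℝ) - 1 := by
    have : (2:ℝ) ≤ l := by exact_mod_cast hl
    linarith
  -- Bernoulli-type bounds
  have bern : ∀ x : ℝ, 0 ≤ x → x ≤ 1 → 1 - (1 - x) ^ (r - 1) ≤ ((r : ℝ) - 1) * x := by
    intro x hx hx1
    have h := one_add_mul_le_pow (a := -x) (n := r - 1) (by linarith)
    rw [hrc] at h
    have e : (1:ℝ) + -x = 1 - x := by ring
    rw [e] at h
    linarith
  have nonneg : ∀ x : ℝ, 0 ≤ x → x ≤ 1 → 0 ≤ 1 - (1 - x) ^ (r - 1) := by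
    intro x hx hx1
    have : (1 - x) ^ (r - 1) ≤ 1 := pow_le_one₀ (by linarith) (by linarith)
    linarith
  have hqr : q₀ * ((r : ℝ) - 1) < 1 := by nlinarith
  refine ⟨by simp [hf, zero_pow (show l - 1 ≠ 0 by omega)], ?_, ?_⟩
  · intro x hx0 hx1 hxle hfix
    by_contra hne
    have hxpos : 0 < x := lt_of_le_of_ne hx0 (Ne.symm hne)
    have hDpos : 0 < ((l : ℝ) - 1) * ((r : ℝ) - 1) := by nlinarith
    have hxD : x * (((l : ℝ) - 1) * ((r : ℝ) - 1)) ≤ 1 := by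
      rw [← le_div_iff₀ hDpos] at *; exact hxle
    have hrx1 : ((r : ℝ) - 1) * x ≤ 1 := by nlinarith
    have b1 : 1 - (1 - x) ^ (r - 1) ≤ ((r : ℝ) - 1) * x := bern x hx0 hx1
    have b0 : 0 ≤ 1 - (1 - x) ^ (r - 1) := nonneg x hx0 hx1
    have step1 : (1 - (1 - x) ^ (r - 1)) ^ (l - 1) ≤ (((r : ℝ) - 1) * x) ^ (l - 1) :=
      pow_le_pow_left₀ b0 b1 _
    have step2 : (((r : ℝ) - 1) * x) ^ (l - 1) ≤ ((r : ℝ) - 1) * x :=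
      pow_le_of_le_one (by positivity) hrx1 (by omega)
    have : f x ≤ q₀ * (((r : ℝ) - 1) * x) := by
      rw [hf]
      have := step1.trans step2
      nlinarith
    rw [hfix] at this
    nlinarith
  · intro hl2 q hq0' hrec
    have hfx : ∀ x : ℝ, f x = q₀ * (1 - (1 - x) ^ (r - 1)) := by
      intro x; rw [hf, hl2]; norm_num
    set c : ℝ := q₀ * ((r : ℝ) - 1) with hc
    have hc0 : 0 ≤ c := by positivity
    have hc1 : c < 1 := hqr
    have key : ∀ d, 0 ≤ q d ∧ q d ≤ 1 ∧ q d ≤ c ^ d := by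
      intro d
      induction d with
      | zero => exact ⟨by simp [hq0', hq0], by simp [hq0', hq1], by simp [hq0', hq1]⟩
      | succ d ih =>
        obtain ⟨h0, h1, h2⟩ := ih
        have b0 := nonneg (q d) h0 h1
        have hq1' : (0:ℝ) ≤ 1 - q d := by linarith
        have b2 : (1 - q d) ^ (r - 1) ≥ 0 := pow_nonneg hq1' _
        have hb1 : 1 - (1 - q d) ^ (r - 1) ≤ 1 := by linarith
        refine ⟨?_, ?_, ?_⟩
        · rw [hrec, hfx]; positivity
        · rw [hrec, hfx]; nlinarith
        · rw [hrec, hfx]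
          have b1 := bern (q d) h0 h1
          have : q₀ * (1 - (1 - q d) ^ (r - 1)) ≤ c * q d := by
            rw [hc]; nlinarith
          calc q₀ * (1 - (1 - q d) ^ (r - 1)) ≤ c * q d := this
            _ ≤ c * c ^ d := by nlinarith
            _ = c ^ (d + 1) := by ring
    have hlim : Tendsto (fun d => c ^ d) atTop (nhds 0) :=
      tendsto_pow_atTop_nhds_zero_of_lt_one hc0 hc1
    exact squeeze_zero (fun d => (key d).1) (fun d => (key d).2.2) hlim
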